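/- Let P = a₀X₀⁴ + 4a₁X₀³X₁ + 6a₂X₀²X₁² + 4a₃X₀X₁³ + a₄X₁⁴ be a nonzero binary quartic, and set g₃(P) := a₀a₂a₄ + 2a₁a₂a₃ − a₂³ − a₀a₃² − a₁²a₄. Then: d₁(P) = 1 if and only if P = λ⁴ for some nonzero linear form λ; d₁(P) = 2 if and only if g₃(P) = 0 and P is not the fourth power of a linear form; and d₁(P) = 3 if and only if g₃(P) ≠ 0. -/

import Mathlib

/-!
Common definitions: the apolar action of `ℂ[X₀,X₁]` on itself
(`Q • P := Q(∂/∂X₀, ∂/∂X₁)(P)`), the apolar ideal `Ann(P)` and its homogeneous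
components, the cokernel `C_P^d` of `Q ↦ Q • P : ℂ[X₀,X₁]_d → ℂ[X₀,X₁]_{l-d}`,
the invariant `d₁(P)` and the Waring rank.
-/

open MvPolynomial

noncomputable section

/-- The partial derivative `∂/∂Xᵢ` as a `ℂ`-linear endomorphism of `ℂ[X₀,X₁]`. -/
def pd (i : Fin 2) : Module.End ℂ (MvPolynomial (Fin 2) ℂ) := (pderiv (R := ℂ) i).toLinearMap

lemma pd_comm : Commute (pd 0) (pd 1) := by
  apply LinearMap.ext
  intro P
  induction P using MvPolynomial.induction_on' with
  | monomial s a =>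
      simp [pd, Module.End.mul_apply, pderiv_monomial]
      rw [tsub_right_comm, mul_right_comm]
  | add p q hp hq => simp_all [Module.End.mul_apply, map_add]

/-- The endomorphism `∂₀^{m 0} ∘ ∂₁^{m 1}` of `ℂ[X₀,X₁]`, as a monoid homomorphism in the
exponent `m`. -/
def derivMonomialHom :
    Multiplicative (Fin 2 →₀ ℕ) →* Module.End ℂ (MvPolynomial (Fin 2) ℂ) where
  toFun m := pd 0 ^ (Multiplicative.toAdd m 0) * pd 1 ^ (Multiplicative.toAdd m 1)
  map_one' := by simp
  map_mul' a b := by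
    simp only [toAdd_mul, Finsupp.add_apply, pow_add]
    exact (Commute.pow_pow pd_comm _ _).mul_mul_mul_comm _ _

/-- The representation of `ℂ[X₀,X₁]` by constant-coefficient differential operators:
`diffOp Q = Q(∂/∂X₀, ∂/∂X₁)`.  It is the morphism of `ℂ`-algebras sending `X i` to
`∂/∂Xᵢ`. -/
def diffOp : MvPolynomial (Fin 2) ℂ →ₐ[ℂ] Module.End ℂ (MvPolynomial (Fin 2) ℂ) :=
  AddMonoidAlgebra.lift ℂ _ (Fin 2 →₀ ℕ) derivMonomialHom

/-- The apolar action `Q • P := Q(∂/∂X₀, ∂/∂X₁)(P)`. -/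
def apolar (Q P : MvPolynomial (Fin 2) ℂ) : MvPolynomial (Fin 2) ℂ := diffOp Q P

/-- For fixed `P`, the map `Q ↦ Q • P` is `ℂ`-linear in `Q`. -/
def apolarLM (P : MvPolynomial (Fin 2) ℂ) :
    MvPolynomial (Fin 2) ℂ →ₗ[ℂ] MvPolynomial (Fin 2) ℂ :=
  (LinearMap.applyₗ P).comp diffOp.toLinearMap

lemma apolarLM_apply (P Q : MvPolynomial (Fin 2) ℂ) : apolarLM P Q = apolar Q P := rfl

/-- The apolar ideal `Ann(P) = {Q | Q • P = 0}`. -/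
def annIdeal (P : MvPolynomial (Fin 2) ℂ) : Ideal (MvPolynomial (Fin 2) ℂ) where
  carrier := {Q | apolar Q P = 0}
  zero_mem' := by simp [apolar]
  add_mem' := by
    intro a b ha hb
    simp only [Set.mem_setOf_eq, apolar, map_add, LinearMap.add_apply] at *
    rw [ha, hb, add_zero]
  smul_mem' := by
    intro c Q hQ
    simp only [Set.mem_setOf_eq, smul_eq_mul, apolar, map_mul, Module.End.mul_apply] at *
    rw [hQ, map_zero]

/-- The degree-`d` homogeneous component `Ann(P)_d` of the apolar ideal of `P`. -/
def annComp (P : MvPolynomial (Fin 2) ℂ) (d : ℕ) :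
    Submodule ℂ (MvPolynomial (Fin 2) ℂ) :=
  homogeneousSubmodule (Fin 2) ℂ d ⊓ LinearMap.ker (apolarLM P)

/-- The image of `ℂ[X₀,X₁]_d` under `Q ↦ Q • P`, viewed as a subspace of `ℂ[X₀,X₁]_{l-d}`
(for `P` homogeneous of degree `l` and `d ≤ l` the image is indeed contained in
`ℂ[X₀,X₁]_{l-d}`). -/
def apolarImage (P : MvPolynomial (Fin 2) ℂ) (l d : ℕ) :
    Submodule ℂ (homogeneousSubmodule (Fin 2) ℂ (l - d)) :=
  Submodule.comap (homogeneousSubmodule (Fin 2) ℂ (l - d)).subtype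
    (Submodule.map (apolarLM P) (homogeneousSubmodule (Fin 2) ℂ d))

/-- `C_P^d`: the cokernel of the `ℂ`-linear map `ℂ[X₀,X₁]_d → ℂ[X₀,X₁]_{l-d}`, `Q ↦ Q • P`. -/
abbrev ApolarCoker (P : MvPolynomial (Fin 2) ℂ) (l d : ℕ) :=
  (homogeneousSubmodule (Fin 2) ℂ (l - d)) ⧸ apolarImage P l d

/-- `d₁(P)`: the minimal degree of a nonzero homogeneous polynomial in `Ann(P)`. -/
def d1 (P : MvPolynomial (Fin 2) ℂ) : ℕ :=
  sInf {d | ∃ Q : MvPolynomial (Fin 2) ℂ, Q ≠ 0 ∧ Q.IsHomogeneous d ∧ apolar Q P = 0}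

/-- The Waring rank of a binary form `P` of degree `l`: the least `r` such that `P` is a sum
of `r` `l`-th powers of linear forms. -/
def waringRank (l : ℕ) (P : MvPolynomial (Fin 2) ℂ) : ℕ :=
  sInf {r | ∃ lam : Fin r → MvPolynomial (Fin 2) ℂ,
    (∀ i, (lam i).IsHomogeneous 1) ∧ P = ∑ i, lam i ^ l}

end


/-!
Write `P = ∑ᵢ (4 choose i) aᵢ X₀^{4-i} X₁^i` and let `Q = ∑ⱼ bⱼ X₀^{d-j} X₁^j` have degree
`d ≤ 4`. Then `Q • P = 0` is the linear system `∑ⱼ bⱼ a_{i+j} = 0`, `0 ≤ i ≤ 4 - d`, given by a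
catalecticant (Hankel) matrix of `P`. For `d = 3` it has 2 equations in 4 unknowns, so a
nonzero solution always exists; for `d = 2` the matrix is square with determinant `g₃(P)`; for
`d = 1` the equations `b₀aᵢ + b₁a_{i+1} = 0` make `(aᵢ)` a geometric progression, i.e.
`P = t (u X₀ + v X₁)⁴`. The degrees in which `Ann(P)` is nonzero form an upward closed set
(multiply by `X₀`) not containing `0`, so `d₁(P) = k + 1` exactly when `k + 1` is such a degree
and `k` is not.
-/

noncomputable section

lemma apolar_C (c : ℂ) (P : MvPolynomial (Fin 2) ℂ) : apolar (C c) P = c • P := by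
  simp [apolar, diffOp, Algebra.algebraMap_eq_smul_one]

lemma apolar_X (i : Fin 2) (P : MvPolynomial (Fin 2) ℂ) : apolar (X i) P = pderiv i P := by
  have hX : (X i : MvPolynomial (Fin 2) ℂ) = AddMonoidAlgebra.single (Finsupp.single i 1) 1 := rfl
  rw [apolar, diffOp, hX, AddMonoidAlgebra.lift_single]
  fin_cases i <;> simp [derivMonomialHom, pd]

lemma apolar_mul (Q R P : MvPolynomial (Fin 2) ℂ) :
    apolar (Q * R) P = apolar Q (apolar R P) := by
  simp [apolar]

lemma apolar_add (Q R P : MvPolynomial (Fin 2) ℂ) :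
    apolar (Q + R) P = apolar Q P + apolar R P := by
  simp [apolar]

lemma apolar_zero_right (Q : MvPolynomial (Fin 2) ℂ) : apolar Q 0 = 0 :=
  map_zero (diffOp Q)

def annDegrees (P : MvPolynomial (Fin 2) ℂ) : Set ℕ :=
  {d | ∃ Q : MvPolynomial (Fin 2) ℂ, Q ≠ 0 ∧ Q.IsHomogeneous d ∧ apolar Q P = 0}

lemma d1_eq_sInf_annDegrees (P : MvPolynomial (Fin 2) ℂ) : d1 P = sInf (annDegrees P) := rfl

lemma mem_annDegrees_of_le (P : MvPolynomial (Fin 2) ℂ) {d e : ℕ} (hde : d ≤ e)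
    (hd : d ∈ annDegrees P) : e ∈ annDegrees P := by
  obtain ⟨Q, hQ0, hQ, hQP⟩ := hd
  refine ⟨X 0 ^ (e - d) * Q, mul_ne_zero (pow_ne_zero _ (X_ne_zero 0)) hQ0, ?_, ?_⟩
  · simpa [Nat.sub_add_cancel hde] using ((isHomogeneous_X ℂ 0).pow (e - d)).mul hQ
  · rw [apolar_mul, hQP, apolar_zero_right]

lemma zero_notMem_annDegrees {P : MvPolynomial (Fin 2) ℂ} (hP : P ≠ 0) : 0 ∉ annDegrees P := by
  rintro ⟨Q, hQ0, hQ, hQP⟩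
  obtain ⟨c, rfl⟩ : ∃ c, Q = C c := ⟨_, totalDegree_eq_zero_iff_eq_C.mp (hQ.totalDegree hQ0)⟩
  rw [apolar_C] at hQP
  exact hP ((smul_eq_zero.mp hQP).resolve_left (by rintro rfl; simp at hQ0))

def linearForm (b0 b1 : ℂ) : MvPolynomial (Fin 2) ℂ := C b0 * X 0 + C b1 * X 1

def quadraticForm (b0 b1 b2 : ℂ) : MvPolynomial (Fin 2) ℂ :=
  C b0 * X 0 ^ 2 + C b1 * (X 0 * X 1) + C b2 * X 1 ^ 2

def cubicForm (b0 b1 b2 b3 : ℂ) : MvPolynomial (Fin 2) ℂ :=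
  C b0 * X 0 ^ 3 + C b1 * (X 0 ^ 2 * X 1) + C b2 * (X 0 * X 1 ^ 2) + C b3 * X 1 ^ 3

def quarticForm (a0 a1 a2 a3 a4 : ℂ) : MvPolynomial (Fin 2) ℂ :=
  C a0 * X 0 ^ 4 + C (4 * a1) * X 0 ^ 3 * X 1 + C (6 * a2) * X 0 ^ 2 * X 1 ^ 2
    + C (4 * a3) * X 0 * X 1 ^ 3 + C a4 * X 1 ^ 4

lemma isHomogeneous_linearForm (b0 b1 : ℂ) : (linearForm b0 b1).IsHomogeneous 1 :=
  ((isHomogeneous_C _ b0).mul (isHomogeneous_X ℂ 0)).add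
    ((isHomogeneous_C _ b1).mul (isHomogeneous_X ℂ 1))

lemma isHomogeneous_quadraticForm (b0 b1 b2 : ℂ) : (quadraticForm b0 b1 b2).IsHomogeneous 2 :=
  (((isHomogeneous_C _ b0).mul ((isHomogeneous_X ℂ 0).pow 2)).add
    ((isHomogeneous_C _ b1).mul ((isHomogeneous_X ℂ 0).mul (isHomogeneous_X ℂ 1)))).add
    ((isHomogeneous_C _ b2).mul ((isHomogeneous_X ℂ 1).pow 2))

lemma isHomogeneous_cubicForm (b0 b1 b2 b3 : ℂ) : (cubicForm b0 b1 b2 b3).IsHomogeneous 3 :=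
  ((((isHomogeneous_C _ b0).mul ((isHomogeneous_X ℂ 0).pow 3)).add
    ((isHomogeneous_C _ b1).mul (((isHomogeneous_X ℂ 0).pow 2).mul (isHomogeneous_X ℂ 1)))).add
    ((isHomogeneous_C _ b2).mul ((isHomogeneous_X ℂ 0).mul ((isHomogeneous_X ℂ 1).pow 2)))).add
    ((isHomogeneous_C _ b3).mul ((isHomogeneous_X ℂ 1).pow 3))

lemma linearForm_eq_zero_iff {b0 b1 : ℂ} : linearForm b0 b1 = 0 ↔ b0 = 0 ∧ b1 = 0 := by
  refine ⟨fun h => ⟨?_, ?_⟩, fun ⟨h0, h1⟩ => by simp [linearForm, h0, h1]⟩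
  · simpa [linearForm] using congrArg (eval ![1, 0]) h
  · simpa [linearForm] using congrArg (eval ![0, 1]) h

lemma quadraticForm_eq_zero_iff {b0 b1 b2 : ℂ} :
    quadraticForm b0 b1 b2 = 0 ↔ b0 = 0 ∧ b1 = 0 ∧ b2 = 0 := by
  refine ⟨fun h => ?_, fun ⟨h0, h1, h2⟩ => by simp [quadraticForm, h0, h1, h2]⟩
  have e₁ := congrArg (eval ![1, 0]) h
  have e₂ := congrArg (eval ![0, 1]) h
  have e₃ := congrArg (eval ![1, 1]) h
  simp only [quadraticForm, map_add, map_mul, map_pow, map_zero, eval_C, eval_X,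
    Matrix.cons_val_zero, Matrix.cons_val_one, Matrix.cons_val_fin_one] at e₁ e₂ e₃
  exact ⟨by linear_combination e₁, by linear_combination e₃ - e₁ - e₂, by linear_combination e₂⟩

lemma cubicForm_eq_zero_iff {b0 b1 b2 b3 : ℂ} :
    cubicForm b0 b1 b2 b3 = 0 ↔ b0 = 0 ∧ b1 = 0 ∧ b2 = 0 ∧ b3 = 0 := by
  refine ⟨fun h => ?_, fun ⟨h0, h1, h2, h3⟩ => by simp [cubicForm, h0, h1, h2, h3]⟩
  have e₁ := congrArg (eval ![1, 0]) h
  have e₂ := congrArg (eval ![0, 1]) h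
  have e₃ := congrArg (eval ![1, 1]) h
  have e₄ := congrArg (eval ![1, -1]) h
  simp only [cubicForm, map_add, map_mul, map_pow, map_zero, eval_C, eval_X,
    Matrix.cons_val_zero, Matrix.cons_val_one, Matrix.cons_val_fin_one] at e₁ e₂ e₃ e₄
  exact ⟨by linear_combination e₁, by linear_combination (e₃ - e₄) / 2 - e₂,
    by linear_combination (e₃ + e₄) / 2 - e₁, by linear_combination e₂⟩

lemma MvPolynomial.IsHomogeneous.eq_sum_fin_two {d : ℕ} {Q : MvPolynomial (Fin 2) ℂ}
    (hQ : Q.IsHomogeneous d) : Q = ∑ i ∈ Finset.range (d + 1),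
      C (coeff (Finsupp.single 0 i + Finsupp.single 1 (d - i)) Q) * X 0 ^ i * X 1 ^ (d - i) := by
  set e : ℕ → Fin 2 →₀ ℕ := fun i => Finsupp.single 0 i + Finsupp.single 1 (d - i)
  have hsupp : Q.support ⊆ (Finset.range (d + 1)).image e := by
    intro m hm
    have hm : m 0 + m 1 = d := by
      rw [← hQ (mem_support_iff.mp hm), Finsupp.weight_apply, Finsupp.sum_fintype _ _ (by simp)]
      simp
    refine Finset.mem_image.mpr ⟨m 0, Finset.mem_range.mpr (by omega), ?_⟩
    ext i
    fin_cases i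
    · simp only [e, Fin.zero_eta, Finsupp.add_apply, Finsupp.single_eq_same,
        Finsupp.single_eq_of_ne zero_ne_one, add_zero]
    · simp only [e, Fin.mk_one, Finsupp.add_apply, Finsupp.single_eq_same,
        Finsupp.single_eq_of_ne one_ne_zero]
      omega
  have he : Set.InjOn e (Finset.range (d + 1)) := fun i _ j _ hij => by
    simpa [e] using congrArg (· 0) hij
  conv_lhs => rw [Q.as_sum, Finset.sum_subset hsupp
    (fun m _ hm => by rw [notMem_support_iff.mp hm, monomial_zero]), Finset.sum_image he]
  refine Finset.sum_congr rfl fun i _ => ?_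
  rw [monomial_eq, Finsupp.prod_fintype _ _ (by simp)]
  simp [e, mul_assoc]

lemma MvPolynomial.IsHomogeneous.exists_eq_linearForm {Q : MvPolynomial (Fin 2) ℂ}
    (hQ : Q.IsHomogeneous 1) : ∃ b0 b1, Q = linearForm b0 b1 := by
  refine ⟨coeff (Finsupp.single 0 1) Q, coeff (Finsupp.single 1 1) Q, ?_⟩
  conv_lhs => rw [hQ.eq_sum_fin_two]
  simp [linearForm, Finset.sum_range_succ, add_comm]

lemma MvPolynomial.IsHomogeneous.exists_eq_quadraticForm {Q : MvPolynomial (Fin 2) ℂ}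
    (hQ : Q.IsHomogeneous 2) : ∃ b0 b1 b2, Q = quadraticForm b0 b1 b2 := by
  refine ⟨coeff (Finsupp.single 0 2) Q, coeff (Finsupp.single 0 1 + Finsupp.single 1 1) Q,
    coeff (Finsupp.single 1 2) Q, ?_⟩
  conv_lhs => rw [hQ.eq_sum_fin_two]
  simp only [quadraticForm, Finset.sum_range_succ, Finset.sum_range_zero, Finsupp.single_zero,
    zero_add, add_zero, pow_zero, pow_one, mul_one, Nat.reduceSub]
  ring

section QuarticAction

variable (a0 a1 a2 a3 a4 : ℂ)

lemma apolar_linearForm_quarticForm (b0 b1 : ℂ) :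
    apolar (linearForm b0 b1) (quarticForm a0 a1 a2 a3 a4) =
      cubicForm (4 * (b0 * a0 + b1 * a1)) (12 * (b0 * a1 + b1 * a2))
        (12 * (b0 * a2 + b1 * a3)) (4 * (b0 * a3 + b1 * a4)) := by
  simp only [linearForm, quarticForm, cubicForm, apolar_add, apolar_mul, apolar_C, apolar_X,
    pow_succ, pow_zero, one_mul, smul_eq_C_mul, map_add, Derivation.leibniz, pderiv_C, pderiv_X,
    smul_eq_mul, Pi.single_eq_same, Pi.single_eq_of_ne, ne_eq, zero_ne_one, one_ne_zero,
    not_false_eq_true, mul_one, mul_zero, add_zero]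
  refine MvPolynomial.funext fun x => ?_
  simp only [map_add, map_mul, map_zero, eval_C, eval_X]
  ring

lemma apolar_quadraticForm_quarticForm (b0 b1 b2 : ℂ) :
    apolar (quadraticForm b0 b1 b2) (quarticForm a0 a1 a2 a3 a4) =
      quadraticForm (12 * (b0 * a0 + b1 * a1 + b2 * a2)) (24 * (b0 * a1 + b1 * a2 + b2 * a3))
        (12 * (b0 * a2 + b1 * a3 + b2 * a4)) := by
  simp only [quadraticForm, quarticForm, apolar_add, apolar_mul, apolar_C, apolar_X, pow_succ,
    pow_zero, one_mul, smul_eq_C_mul, map_add, Derivation.leibniz, pderiv_C, pderiv_X,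
    smul_eq_mul, Pi.single_eq_same, Pi.single_eq_of_ne, ne_eq, zero_ne_one, one_ne_zero,
    not_false_eq_true, mul_one, mul_zero, add_zero]
  refine MvPolynomial.funext fun x => ?_
  simp only [map_add, map_mul, map_zero, map_one, eval_C, eval_X]
  ring

lemma apolar_cubicForm_quarticForm (b0 b1 b2 b3 : ℂ) :
    apolar (cubicForm b0 b1 b2 b3) (quarticForm a0 a1 a2 a3 a4) =
      linearForm (24 * (b0 * a0 + b1 * a1 + b2 * a2 + b3 * a3))
        (24 * (b0 * a1 + b1 * a2 + b2 * a3 + b3 * a4)) := by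
  simp only [cubicForm, quarticForm, linearForm, apolar_add, apolar_mul, apolar_C, apolar_X,
    pow_succ, pow_zero, one_mul, smul_eq_C_mul, map_add, Derivation.leibniz, pderiv_C, pderiv_X,
    Derivation.map_one_eq_zero, smul_eq_mul, Pi.single_eq_same, Pi.single_eq_of_ne, ne_eq,
    zero_ne_one, one_ne_zero, not_false_eq_true, mul_one, mul_zero, add_zero]
  refine MvPolynomial.funext fun x => ?_
  simp only [map_add, map_mul, map_zero, map_one, eval_C, eval_X]
  ring

end QuarticAction

lemma apolar_linearForm_linearForm_pow (c0 c1 : ℂ) (n : ℕ) :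
    apolar (linearForm c1 (-c0)) (linearForm c0 c1 ^ n) = 0 := by
  simp only [linearForm, apolar_add, apolar_mul, apolar_C, apolar_X, smul_eq_C_mul, pderiv_pow,
    map_add, pderiv_C_mul, pderiv_X, Pi.single_eq_same, Pi.single_eq_of_ne, ne_eq, zero_ne_one,
    one_ne_zero, not_false_eq_true, mul_one, mul_zero, add_zero, zero_add]
  rw [C_neg]
  ring

section Catalecticant

variable {a0 a1 a2 a3 a4 : ℂ}

lemma apolar_linearForm_quarticForm_eq_zero_iff {b0 b1 : ℂ} :
    apolar (linearForm b0 b1) (quarticForm a0 a1 a2 a3 a4) = 0 ↔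
      b0 * a0 + b1 * a1 = 0 ∧ b0 * a1 + b1 * a2 = 0 ∧ b0 * a2 + b1 * a3 = 0 ∧
        b0 * a3 + b1 * a4 = 0 := by
  rw [apolar_linearForm_quarticForm, cubicForm_eq_zero_iff]
  simp

lemma apolar_quadraticForm_quarticForm_eq_zero_iff {b0 b1 b2 : ℂ} :
    apolar (quadraticForm b0 b1 b2) (quarticForm a0 a1 a2 a3 a4) = 0 ↔
      (!![a0, a1, a2; a1, a2, a3; a2, a3, a4] : Matrix (Fin 3) (Fin 3) ℂ).mulVec ![b0, b1, b2] =
        0 := by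
  rw [apolar_quadraticForm_quarticForm, quadraticForm_eq_zero_iff]
  simp [_root_.funext_iff, Fin.forall_fin_succ, add_assoc]

lemma exists_quarticForm_eq_C_mul_linearForm_pow {b0 b1 : ℂ} (hb : linearForm b0 b1 ≠ 0)
    (h : apolar (linearForm b0 b1) (quarticForm a0 a1 a2 a3 a4) = 0) :
    ∃ t u v, quarticForm a0 a1 a2 a3 a4 = C t * linearForm u v ^ 4 := by
  obtain ⟨h0, h1, h2, h3⟩ := apolar_linearForm_quarticForm_eq_zero_iff.mp h
  by_cases hb1 : b1 = 0
  · have hb0 : b0 ≠ 0 := fun hb0 => hb (linearForm_eq_zero_iff.mpr ⟨hb0, hb1⟩)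
    subst hb1
    simp only [zero_mul, add_zero, mul_eq_zero, hb0, false_or] at h0 h1 h2 h3
    subst h0 h1 h2 h3
    exact ⟨a4, 0, 1, by simp [quarticForm, linearForm]⟩
  · have ha4 : a4 = -b0 / b1 * a3 := by field_simp; linear_combination h3
    have ha3 : a3 = -b0 / b1 * a2 := by field_simp; linear_combination h2
    have ha2 : a2 = -b0 / b1 * a1 := by field_simp; linear_combination h1
    have ha1 : a1 = -b0 / b1 * a0 := by field_simp; linear_combination h0
    subst ha4 ha3 ha2 ha1
    refine ⟨a0, 1, -b0 / b1, MvPolynomial.funext fun x => ?_⟩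
    simp only [quarticForm, linearForm, map_add, map_mul, map_pow, map_one, eval_C, eval_X]
    ring

lemma one_mem_annDegrees_quarticForm_iff (hP : quarticForm a0 a1 a2 a3 a4 ≠ 0) :
    1 ∈ annDegrees (quarticForm a0 a1 a2 a3 a4) ↔ ∃ lam : MvPolynomial (Fin 2) ℂ,
      lam.IsHomogeneous 1 ∧ lam ≠ 0 ∧ quarticForm a0 a1 a2 a3 a4 = lam ^ 4 := by
  constructor
  · rintro ⟨Q, hQ0, hQ, hQP⟩
    obtain ⟨b0, b1, rfl⟩ := hQ.exists_eq_linearForm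
    obtain ⟨t, u, v, hP4⟩ := exists_quarticForm_eq_C_mul_linearForm_pow hQ0 hQP
    obtain ⟨z, rfl⟩ := IsAlgClosed.exists_pow_nat_eq t four_pos
    have hpow : quarticForm a0 a1 a2 a3 a4 = linearForm (z * u) (z * v) ^ 4 := by
      rw [hP4, linearForm, linearForm]
      simp only [map_mul, map_pow]
      ring
    refine ⟨_, isHomogeneous_linearForm _ _, fun h => hP ?_, hpow⟩
    rw [hpow, h, zero_pow four_ne_zero]
  · rintro ⟨lam, hlam, hlam0, hP4⟩
    obtain ⟨c0, c1, rfl⟩ := hlam.exists_eq_linearForm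
    refine ⟨linearForm c1 (-c0), fun h => hlam0 ?_, isHomogeneous_linearForm _ _, ?_⟩
    · obtain ⟨h1, h0⟩ := linearForm_eq_zero_iff.mp h
      exact linearForm_eq_zero_iff.mpr ⟨neg_eq_zero.mp h0, h1⟩
    · rw [hP4, apolar_linearForm_linearForm_pow]

lemma two_mem_annDegrees_quarticForm_iff :
    2 ∈ annDegrees (quarticForm a0 a1 a2 a3 a4) ↔
      a0 * a2 * a4 + 2 * a1 * a2 * a3 - a2 ^ 3 - a0 * a3 ^ 2 - a1 ^ 2 * a4 = 0 := by
  have hdet : (!![a0, a1, a2; a1, a2, a3; a2, a3, a4] : Matrix (Fin 3) (Fin 3) ℂ).det =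
      a0 * a2 * a4 + 2 * a1 * a2 * a3 - a2 ^ 3 - a0 * a3 ^ 2 - a1 ^ 2 * a4 := by
    simp only [Matrix.det_fin_three, Matrix.of_apply, Matrix.cons_val', Matrix.cons_val_zero,
      Matrix.cons_val_one, Matrix.cons_val, Matrix.cons_val_fin_one]
    ring
  rw [← hdet, ← Matrix.exists_mulVec_eq_zero_iff]
  constructor
  · rintro ⟨Q, hQ0, hQ, hQP⟩
    obtain ⟨b0, b1, b2, rfl⟩ := hQ.exists_eq_quadraticForm
    refine ⟨![b0, b1, b2], fun hb => hQ0 ?_, apolar_quadraticForm_quarticForm_eq_zero_iff.mp hQP⟩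
    simp_all [quadraticForm_eq_zero_iff]
  · rintro ⟨b, hb0, hMb⟩
    refine ⟨quadraticForm (b 0) (b 1) (b 2), fun hQ => hb0 ?_, isHomogeneous_quadraticForm _ _ _,
      apolar_quadraticForm_quarticForm_eq_zero_iff.mpr ?_⟩
    · obtain ⟨h0, h1, h2⟩ := quadraticForm_eq_zero_iff.mp hQ
      ext i
      fin_cases i <;> assumption
    · convert hMb
      ext i
      fin_cases i <;> rfl

lemma three_mem_annDegrees_quarticForm : 3 ∈ annDegrees (quarticForm a0 a1 a2 a3 a4) := by
  let M : Matrix (Fin 2) (Fin 4) ℂ := !![a0, a1, a2, a3; a1, a2, a3, a4]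
  obtain ⟨b, hMb, hb0⟩ := (Submodule.ne_bot_iff _).mp
    (LinearMap.ker_ne_bot_of_finrank_lt (f := M.mulVecLin) (by simp))
  have e0 : M.mulVec b 0 = 0 := congrFun hMb 0
  have e1 : M.mulVec b 1 = 0 := congrFun hMb 1
  simp only [M, Matrix.mulVec, dotProduct, Fin.sum_univ_four, Matrix.of_apply, Matrix.cons_val',
    Matrix.cons_val_zero, Matrix.cons_val_one, Matrix.cons_val, Matrix.cons_val_fin_one] at e0 e1
  refine ⟨cubicForm (b 0) (b 1) (b 2) (b 3), fun hQ => hb0 ?_, isHomogeneous_cubicForm _ _ _ _, ?_⟩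
  · obtain ⟨h0, h1, h2, h3⟩ := cubicForm_eq_zero_iff.mp hQ
    ext i
    fin_cases i <;> assumption
  · rw [apolar_cubicForm_quarticForm, linearForm_eq_zero_iff]
    exact ⟨by linear_combination 24 * e0, by linear_combination 24 * e1⟩

end Catalecticant

end

/-- For a nonzero binary quartic
`P = a₀X₀⁴ + 4a₁X₀³X₁ + 6a₂X₀²X₁² + 4a₃X₀X₁³ + a₄X₁⁴` and
`g₃(P) = a₀a₂a₄ + 2a₁a₂a₃ − a₂³ − a₀a₃² − a₁²a₄`:
`d₁(P) = 1` iff `P` is a fourth power of a nonzero linear form; `d₁(P) = 2` iff `g₃(P) = 0`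
and `P` is not a fourth power of a linear form; `d₁(P) = 3` iff `g₃(P) ≠ 0`. -/
theorem d1_quartic (a0 a1 a2 a3 a4 : ℂ)
    (P : MvPolynomial (Fin 2) ℂ)
    (hPdef : P = C a0 * X 0 ^ 4 + C (4 * a1) * X 0 ^ 3 * X 1 + C (6 * a2) * X 0 ^ 2 * X 1 ^ 2
      + C (4 * a3) * X 0 * X 1 ^ 3 + C a4 * X 1 ^ 4)
    (hP0 : P ≠ 0)
    (g3 : ℂ) (hg3 : g3 = a0 * a2 * a4 + 2 * a1 * a2 * a3 - a2 ^ 3 - a0 * a3 ^ 2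
      - a1 ^ 2 * a4) :
    (d1 P = 1 ↔ ∃ lam : MvPolynomial (Fin 2) ℂ,
        lam.IsHomogeneous 1 ∧ lam ≠ 0 ∧ P = lam ^ 4) ∧
    (d1 P = 2 ↔ g3 = 0 ∧
        ¬∃ lam : MvPolynomial (Fin 2) ℂ, lam.IsHomogeneous 1 ∧ P = lam ^ 4) ∧
    (d1 P = 3 ↔ g3 ≠ 0) := by
  have hpow : (∃ lam : MvPolynomial (Fin 2) ℂ, lam.IsHomogeneous 1 ∧ P = lam ^ 4) ↔
      ∃ lam : MvPolynomial (Fin 2) ℂ, lam.IsHomogeneous 1 ∧ lam ≠ 0 ∧ P = lam ^ 4 :=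
    exists_congr fun lam => and_congr_right fun _ =>
      ⟨fun h => ⟨fun hlam => hP0 (by rw [h, hlam, zero_pow four_ne_zero]), h⟩, And.right⟩
  have hd1 := Nat.sInf_upward_closed_eq_succ_iff fun _ _ => mem_annDegrees_of_le P
  change P = quarticForm a0 a1 a2 a3 a4 at hPdef
  subst hPdef hg3
  rw [d1_eq_sInf_annDegrees]
  refine ⟨(hd1 0).trans ?_, (hd1 1).trans ?_, (hd1 2).trans ?_⟩
  · simp [zero_notMem_annDegrees hP0, one_mem_annDegrees_quarticForm_iff hP0]
  · rw [one_mem_annDegrees_quarticForm_iff hP0, two_mem_annDegrees_quarticForm_iff, ← hpow]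
  · simp [three_mem_annDegrees_quarticForm, two_mem_annDegrees_quarticForm_iff]
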